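/- arXiv:2309.08084 — 3 statements merged into one kernel-verified Lean document; each statement's English description precedes it below -/
import Mathlib

section
/- Let V be a lextensive category (extensive with finite limits) admitting all set-indexed copowers of the terminal object, and write X · 1 for the copower of the terminal object 1 by a set X. Then the copower functor Set → V, X ↦ X · 1, preserves pullbacks. -/
open CategoryTheory CategoryTheory.Limits

universe v u

variable (V : Type u) [Category.{v} V]

/-- The copower functor `Set → V`, `X ↦ X · 1`, sending a set to the `X`-indexed copower of
the terminal object. -/
noncomputable def copowerFunctor [HasTerminal V] [HasCoproducts.{v} V] : Type v ⥤ V where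
  obj X := ∐ fun (_ : X) => (⊤_ V)
  map {X Y} f := Sigma.desc fun x => Sigma.ι (fun (_ : Y) => (⊤_ V)) (f x)
  map_id X := by
    ext x
    simp
  map_comp {X Y Z} f g := by
    ext x
    simp

/-!
For `u : A → B`, the copower `A · 1` is the coproduct of the fibre copowers `u⁻¹(b) · 1`, so the
van Kampen property of `B · 1 = ∐_b 1` makes `u⁻¹(b) · 1` the pullback of `u · 1` along the
`b`-th coprojection `1 → B · 1`. For a cospan `f : X → Z ← Y : g`, the pullback `P` of sets is
the disjoint union over `x : X` of the fibres `g⁻¹(f x)`, and `g⁻¹(f x) · 1` is the pullback of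
`g · 1` along `1 → X · 1 → Z · 1`. Since pullback along `g · 1` commutes with the universal
coproduct `X · 1 = ∐_x 1`, the coproduct `P · 1 = ∐_x g⁻¹(f x) · 1` is the pullback of `f · 1`
and `g · 1`.
-/

lemma CategoryTheory.Limits.Types.bijective_sigma_pullbackObj {X Y Z : Type v}
    (f : X ⟶ Z) (g : Y ⟶ Z) :
    Function.Bijective fun s : Σ x, {y // g y = f x} =>
      (⟨(s.1, s.2.1), s.2.2.symm⟩ : Types.PullbackObj f g) := by
  refine ⟨?_, fun p => ⟨⟨p.1.1, p.1.2, p.2.symm⟩, rfl⟩⟩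
  rintro ⟨x, y, hy⟩ ⟨x', y', hy'⟩ h
  simp only [Subtype.mk.injEq, Prod.mk.injEq] at h
  obtain ⟨rfl, rfl⟩ := h
  rfl

namespace copowerFunctor

variable [HasTerminal V] [HasCoproducts.{v} V]

noncomputable def ι (A : Type v) (a : A) : ⊤_ V ⟶ (copowerFunctor V).obj A :=
  Sigma.ι (fun _ : A => ⊤_ V) a

noncomputable def cofan (A : Type v) : Cofan fun _ : A => ⊤_ V :=
  Cofan.mk ((copowerFunctor V).obj A) (ι V A)

noncomputable def isColimitCofan (A : Type v) : IsColimit (cofan V A) :=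
  coproductIsCoproduct _

variable {V}

noncomputable def desc {A : Type v} {W : V} (f : A → (⊤_ V ⟶ W)) :
    (copowerFunctor V).obj A ⟶ W :=
  Sigma.desc f

@[simp]
lemma ι_desc {A : Type v} {W : V} (f : A → (⊤_ V ⟶ W)) (a : A) : ι V A a ≫ desc f = f a :=
  Sigma.ι_desc f a

@[ext]
lemma hom_ext {A : Type v} {W : V} {f g : (copowerFunctor V).obj A ⟶ W}
    (h : ∀ a, ι V A a ≫ f = ι V A a ≫ g) : f = g :=
  Sigma.hom_ext _ _ h

@[simp]
lemma ι_map {A B : Type v} (u : A ⟶ B) (a : A) :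
    ι V A a ≫ (copowerFunctor V).map u = ι V B (u a) := by
  simp [ι, copowerFunctor]

@[simp]
lemma ι_map_assoc {A B : Type v} (u : A ⟶ B) (a : A) {W : V}
    (h : (copowerFunctor V).obj B ⟶ W) :
    ι V A a ≫ (copowerFunctor V).map u ≫ h = ι V B (u a) ≫ h := by
  rw [← Category.assoc, ι_map]

lemma map_const {A B : Type v} (b : B) :
    (copowerFunctor V).map (↾fun _ : A => b) = terminal.from _ ≫ ι V B b := by
  ext a
  rw [ι_map, ← Category.assoc, terminal.hom_ext (_ ≫ terminal.from _) (𝟙 _), Category.id_comp]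
  rfl

noncomputable def mapCofan {J A : Type v} {E : J → Type v} (i : ∀ x, E x → A) :
    Cofan fun x => (copowerFunctor V).obj (E x) :=
  Cofan.mk ((copowerFunctor V).obj A) fun x => (copowerFunctor V).map (↾(i x))

noncomputable def isColimitMapCofan {J A : Type v} {E : J → Type v} (i : ∀ x, E x → A)
    (hi : Function.Bijective fun s : Σ x, E x => i s.1 s.2) :
    IsColimit (mapCofan (V := V) i) := by
  let e := Equiv.ofBijective _ hi
  have inj_symm_apply (t : Cofan fun x => (copowerFunctor V).obj (E x)) (s : Σ x, E x) :
      ι V _ (e.symm (e s)).2 ≫ t.inj (e.symm (e s)).1 = ι V _ s.2 ≫ t.inj s.1 := by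
    rw [e.symm_apply_apply]
  refine Cofan.IsColimit.mk _
    (fun t => desc fun a => ι V _ (e.symm a).2 ≫ t.inj (e.symm a).1)
    (fun t x => ?_) (fun t m hm => ?_)
  · ext y
    simp only [mapCofan, cofan_mk_inj, ι_map_assoc, ι_desc]
    exact inj_symm_apply t ⟨x, y⟩
  · refine hom_ext fun a => ?_
    obtain ⟨⟨x, y⟩, rfl⟩ := e.surjective a
    calc ι V A (i x y) ≫ m = ι V (E x) y ≫ (mapCofan i).inj x ≫ m :=
          (ι_map_assoc (↾(i x)) y m).symm
      _ = ι V (E x) y ≫ t.inj x := by rw [hm x]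
      _ = _ := by rw [ι_desc]; exact (inj_symm_apply t ⟨x, y⟩).symm

lemma isPullback_map_subtype_val {A B : Type v} (u : A → B) (b : B)
    (hB : IsVanKampenColimit (cofan V B)) :
    IsPullback ((copowerFunctor V).map (↾(Subtype.val : {a // u a = b} → A))) (terminal.from _)
      ((copowerFunctor V).map (↾u)) (ι V B b) := by
  have hA := isColimitMapCofan (V := V) (fun z (a : {a // u a = z}) => a.1)
    (Equiv.sigmaFiberEquiv u).bijective
  refine (hB (mapCofan _) (Discrete.natTrans fun _ => terminal.from _)
    ((copowerFunctor V).map (↾u)) ?_ (.of_discrete _)).mp ⟨hA⟩ ⟨b⟩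
  ext ⟨z⟩ : 2
  dsimp [mapCofan, cofan]
  rw [← Functor.map_comp, ← map_const]
  congr 1
  ext a
  exact a.2.symm

lemma isPullback_map_pullbackCone [HasPullbacks V] {X Y Z : Type v} (f : X ⟶ Z) (g : Y ⟶ Z)
    (hX : IsUniversalColimit (cofan V X)) (hZ : IsVanKampenColimit (cofan V Z)) :
    IsPullback ((copowerFunctor V).map (Types.pullbackCone f g).fst)
      ((copowerFunctor V).map (Types.pullbackCone f g).snd)
      ((copowerFunctor V).map f) ((copowerFunctor V).map g) := by
  let fibreVal (x : X) := (copowerFunctor V).map (↾(Subtype.val : {y // g y = f x} → Y))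
  have hd := isColimitMapCofan (V := V)
    (fun x (y : {y // g y = f x}) => (⟨(x, y.1), y.2.symm⟩ : Types.PullbackObj f g))
    (Types.bijective_sigma_pullbackObj f g)
  have hP := hX.isPullback_of_isColimit_right (fun x => ι V Z (f x)) ((copowerFunctor V).map f)
    ((copowerFunctor V).map g) (fun x => terminal.from _) fibreVal
    (fun x => (isPullback_map_subtype_val g (f x) hZ).flip) hd (fun x => ι_map f x)
  have hfst : (copowerFunctor V).map (Types.pullbackCone f g).fst =
      Cofan.IsColimit.desc hd (fun x => terminal.from _ ≫ (cofan V X).inj x) :=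
    Cofan.IsColimit.hom_ext hd _ _ fun x =>
      (((copowerFunctor V).map_comp _ _).symm.trans (map_const x)).trans
        (Cofan.IsColimit.fac hd _ x).symm
  have hsnd : (copowerFunctor V).map (Types.pullbackCone f g).snd =
      Cofan.IsColimit.desc hd fibreVal :=
    Cofan.IsColimit.hom_ext hd _ _ fun x =>
      ((copowerFunctor V).map_comp _ _).symm.trans (Cofan.IsColimit.fac hd fibreVal x).symm
  rw [hfst, hsnd]
  exact hP

lemma preservesLimit_cospan [HasPullbacks V] {X Y Z : Type v} (f : X ⟶ Z) (g : Y ⟶ Z)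
    (hX : IsUniversalColimit (cofan V X)) (hZ : IsVanKampenColimit (cofan V Z)) :
    PreservesLimit (cospan f g) (copowerFunctor V) :=
  preservesLimit_of_preserves_limit_cone (Types.pullbackLimitCone f g).isLimit <|
    (PullbackCone.isLimitMapConeEquiv _ _).symm (isPullback_map_pullbackCone f g hX hZ).isLimit

end copowerFunctor

/-- If `V` is lextensive (finite limits, and set-indexed coproducts which are van Kampen,
i.e. disjoint and universal), then the copower functor `Set → V`, `X ↦ X · 1`,
preserves pullbacks. -/
theorem copowerFunctor_preservesPullbacks
    [HasFiniteLimits V] [HasCoproducts.{v} V]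
    (hVK : ∀ {ι : Type v} (F : Discrete ι ⥤ V) (c : Cocone F),
      IsColimit c → IsVanKampenColimit c) :
    PreservesLimitsOfShape WalkingCospan (copowerFunctor V) := by
  have hcofan (A : Type v) : IsVanKampenColimit (copowerFunctor.cofan V A) :=
    hVK _ _ (copowerFunctor.isColimitCofan V A)
  refine ⟨fun {K} => ?_⟩
  have := copowerFunctor.preservesLimit_cospan (K.map WalkingCospan.Hom.inl)
    (K.map WalkingCospan.Hom.inr) (hcofan _).isUniversal (hcofan _)
  exact preservesLimit_of_iso_diagram _ (diagramIsoCospan K).symm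
end

section
/- Let V be a lextensive category with set-indexed coproducts, and define an object c of V to be discrete if the counit ε_c : V(1,c)·1 → c of the adjunction (−)·1 ⊣ V(1,−) is an isomorphism. Suppose 1 is connected in V. Then a coproduct Σ_{i∈I} c_i is discrete if and only if c_i is discrete for every i ∈ I. -/
/-!
Because `1` is connected, the points of `∐ c` are the disjoint union of the points of the `c i`.
Hence, up to the reindexing `∐ᵢ ∐_{V(1,cᵢ)} 1 ≅ ∐_{Σᵢ V(1,cᵢ)} 1`, the counit of `∐ c` is the
coproduct of the counits of the `c i`. In an extensive category each component of a coproduct of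
maps is the pullback of the whole along a coprojection, so the coproduct of maps is invertible
exactly when every component is.
-/

open CategoryTheory CategoryTheory.Limits Opposite

universe v u

variable {V : Type u} [Category.{v} V]

/-- The counit `ε_c : V(1,c)·1 ⟶ c` of the adjunction `(−)·1 ⊣ V(1,−)`: the canonical map
from the copower of the terminal object by the set of points of `c`. -/
noncomputable def counitPoints [HasTerminal V] [HasCoproducts.{v} V] (c : V) :
    (∐ fun (_ : (⊤_ V) ⟶ c) => (⊤_ V)) ⟶ c :=
  Sigma.desc fun p => p

/-- An object `c` is discrete if the counit `ε_c : V(1,c)·1 ⟶ c` is an isomorphism. -/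
noncomputable def IsDiscreteObj [HasTerminal V] [HasCoproducts.{v} V] (c : V) : Prop :=
  IsIso (counitPoints c)

theorem isIso_sigmaMap_iff_of_isVanKampen {I : Type*} {a b : I → V} [HasCoproduct a]
    [HasCoproduct b] (hb : IsVanKampenColimit (Cofan.mk (∐ b) (Sigma.ι b)))
    (f : ∀ i, a i ⟶ b i) :
    IsIso (Limits.Sigma.map f) ↔ ∀ i, IsIso (f i) := by
  refine ⟨fun _ i => ?_, fun _ => ?_⟩
  · have hsq := (hb (Cofan.mk (∐ a) (Sigma.ι a)) (Discrete.natTrans fun i => f i.as)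
      (Limits.Sigma.map f) (by ext; simp) (.of_discrete _)).mp ⟨coproductIsCoproduct a⟩ ⟨i⟩
    exact hsq.isIso_snd_of_isIso
  · exact ⟨Limits.Sigma.map fun i => inv (f i), by ext; simp, by ext; simp⟩

theorem bijective_sigma_comp_ι (T : V) {I : Type*} (c : I → V) [HasCoproduct c]
    [PreservesColimit (Discrete.functor c) (coyoneda.obj (op T))] :
    Function.Bijective fun x : Σ i, T ⟶ c i => x.2 ≫ Sigma.ι c x.1 :=
  (Cofan.nonempty_isColimit_iff_bijective_fromSigma _).mp
    ⟨isColimitOfHasCoproductOfPreservesColimit (coyoneda.obj (op T)) c⟩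

theorem sigmaMap_counitPoints [HasTerminal V] [HasCoproducts.{v} V] {I : Type v} (c : I → V) :
    Limits.Sigma.map (fun i => counitPoints (c i)) =
      (sigmaSigmaIso (fun i => (⊤_ V) ⟶ c i) fun _ _ => ⊤_ V).hom ≫
        Sigma.map' (fun x => x.2 ≫ Sigma.ι c x.1) (fun _ => 𝟙 _) ≫ counitPoints (∐ c) := by
  ext i p
  simp [sigmaSigmaIso, counitPoints, Sigma.ι_comp_map'_assoc]

theorem isDiscreteObj_sigma_iff [HasTerminal V] [HasCoproducts.{v} V] {I : Type v} (c : I → V)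
    [PreservesColimit (Discrete.functor c) (coyoneda.obj (op (⊤_ V)))] :
    IsDiscreteObj (∐ c) ↔ IsIso (Limits.Sigma.map fun i => counitPoints (c i)) := by
  have : IsIso (Sigma.map' (g := fun _ => ⊤_ V) (fun x : Σ i, (⊤_ V) ⟶ c i => x.2 ≫ Sigma.ι c x.1)
      fun _ => 𝟙 (⊤_ V)) :=
    (Sigma.whiskerEquiv (f := fun _ => ⊤_ V) (g := fun _ => ⊤_ V)
      (Equiv.ofBijective _ (bijective_sigma_comp_ι (⊤_ V) c)) fun _ => Iso.refl _).isIso_hom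
  rw [sigmaMap_counitPoints, isIso_comp_left_iff, isIso_comp_left_iff]
  rfl

/-- In a lextensive category with connected terminal object, a set-indexed coproduct is
discrete if and only if each of its summands is discrete. -/
theorem coproduct_discrete_iff
    [HasFiniteLimits V] [HasCoproducts.{v} V]
    (hVK : ∀ {ι : Type v} (F : Discrete ι ⥤ V) (c : Cocone F),
      IsColimit c → IsVanKampenColimit c)
    (hconn : ∀ ι : Type v, PreservesColimitsOfShape (Discrete ι) (coyoneda.obj (op (⊤_ V))))
    {I : Type v} (c : I → V) :
    IsDiscreteObj (∐ c) ↔ ∀ i, IsDiscreteObj (c i) := by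
  have := hconn I
  rw [isDiscreteObj_sigma_iff, isIso_sigmaMap_iff_of_isVanKampen (hVK _ _ (coproductIsCoproduct c))]
  rfl
end

section
/- Let C be an extensive category with pullbacks and set-indexed coproducts. Suppose given a commutative square of set-indexed families: index sets W, X, Y, Z with functions f : W → X, g : W → Y, h : X → Z, k : Y → Z forming a pullback square of sets with h∘f = k∘g, families a : W → Ob(C), b : X → Ob(C), c : Y → Ob(C), d : Z → Ob(C), and morphisms â_w : a_w → b_{f w}, ĝ_w : a_w → c_{g w}, ĥ_x : b_x → d_{h x}, k̂_y : c_y → d_{k y}, such that for each w ∈ W the square (â_w, ĝ_w, ĥ_{f w}, k̂_{g w}) is a pullback in C. Then the induced square of coproducts Σ_w a_w → Σ_x b_x, Σ_w a_w → Σ_y c_y, Σ_x b_x → Σ_z d_z, Σ_y c_y → Σ_z d_z is a pullback square in C. -/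
/-!
Coproducts in an extensive category are universal, so pullbacks distribute over them:
`(∐ b) ×_{∐ d} (∐ c)` is the coproduct over `(x, y) ∈ X × Y` of `b x ×_{∐ d} c y`. Coprojections
are monomorphisms, so this summand is `a w` when `(x, y) = (f w, g w)`; such a `w` is unique
because the index square is a pullback of sets. When there is no such `w`, that pullback gives
`h x ≠ k y`, and the summand is initial because distinct coprojections are disjoint and the
initial object is strict. Grouping the summands
of `∐ a` along the fibres of `w ↦ (f w, g w)` identifies the two coproducts.
-/

open CategoryTheory CategoryTheory.Limits

universe v u

variable {C : Type u} [Category.{v} C]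

noncomputable def IsUniversalColimit.isInitialOfIsEmpty {ι : Type*} [IsEmpty ι]
    {F : Discrete ι ⥤ C} {c : Cocone F} (hc : IsUniversalColimit c) {A : C} (t : A ⟶ c.pt) :
    IsInitial A :=
  let emptyCocone (M : C) : Cocone F :=
    ⟨M, ⟨fun j => isEmptyElim j.as, fun j => isEmptyElim j.as⟩⟩
  have hA := (hc (emptyCocone A) (𝟙 F) t (by ext j; exact isEmptyElim j.as)
    (.of_discrete _) (fun j => isEmptyElim j.as)).some
  IsInitial.ofUniqueHom (fun M => hA.desc (emptyCocone M))
    (fun _ _ => hA.hom_ext fun j => isEmptyElim j.as)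

theorem IsUniversalColimit.hasStrictInitialObjects {ι : Type*} [IsEmpty ι]
    {F : Discrete ι ⥤ C} {c : Cocone F} (hc : IsUniversalColimit c) :
    HasStrictInitialObjects C where
  out {I A} f hI := by
    have hA := IsUniversalColimit.isInitialOfIsEmpty hc (f ≫ hI.to c.pt)
    rw [hA.hom_ext f (hA.to I)]
    exact (hA.uniqueUpToIso hI).isIso_hom

noncomputable def Cofan.isInitialOfInjEq [HasInitial C] [HasStrictInitialObjects C]
    {ι : Type*} {X : ι → C} {c : Cofan X} (hc : IsVanKampenColimit c) {i j : ι} (hij : i ≠ j)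
    {T : C} (u : T ⟶ X i) (v : T ⟶ X j) (huv : u ≫ c.inj i = v ≫ c.inj j) : IsInitial T :=
  IsInitial.ofIso initialIsInitial (asIso
    ((isPullback_initial_to_of_cofan_isVanKampen hc ⟨i⟩ ⟨j⟩ (by simpa using hij)).lift
      u v huv)).symm

noncomputable def isColimitFiberwiseCofan {I W : Type*} (π : W → I) (a : W → C)
    [HasCoproduct a] [∀ i, HasCoproduct fun w : {w // π w = i} => a w.1] :
    IsColimit (Cofan.mk (∐ a) fun i => Sigma.desc fun w : {w // π w = i} => Sigma.ι a w.1) :=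
  Cofan.IsColimit.mk _
    (fun t => Sigma.desc fun w =>
      Sigma.ι (fun w' : {w' // π w' = π w} => a w'.1) ⟨w, rfl⟩ ≫ t.inj (π w))
    (fun t i => Sigma.hom_ext _ _ fun ⟨w, hw⟩ => by subst hw; simp [Cofan.inj])
    (fun t m hm => Sigma.hom_ext (f := a) _ _ fun w => by rw [Sigma.ι_desc, ← hm]; simp)

@[simp]
theorem isColimitFiberwiseCofan_desc {I W : Type*} (π : W → I) (a : W → C)
    [HasCoproduct a] [∀ i, HasCoproduct fun w : {w // π w = i} => a w.1] {T : C}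
    (F : ∀ i, (∐ fun w : {w // π w = i} => a w.1) ⟶ T) :
    Cofan.IsColimit.desc (isColimitFiberwiseCofan π a) F =
      Sigma.desc fun w => Sigma.ι (fun w' : {w' // π w' = π w} => a w'.1) ⟨w, rfl⟩ ≫ F (π w) :=
  rfl

theorem CategoryTheory.IsPullback.comp_mono {P X Y Z W : C} {fst : P ⟶ X} {snd : P ⟶ Y}
    {f : X ⟶ Z} {g : Y ⟶ Z} (h : IsPullback fst snd f g) (i : Z ⟶ W) [Mono i] :
    IsPullback fst snd (f ≫ i) (g ≫ i) :=
  .of_isLimit (PullbackCone.isLimitOfCompMono f g i h.cone h.isLimit)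

theorem CategoryTheory.IsPullback.of_isInitial {P X Y Z : C} (hP : IsInitial P)
    (fst : P ⟶ X) (snd : P ⟶ Y) {f : X ⟶ Z} {g : Y ⟶ Z}
    (H : ∀ {T : C} (u : T ⟶ X) (v : T ⟶ Y), u ≫ f = v ≫ g → IsInitial T) :
    IsPullback fst snd f g where
  w := hP.hom_ext _ _
  isLimit' := ⟨PullbackCone.IsLimit.mk _ (fun s => (H _ _ s.condition).to P)
    (fun s => (H _ _ s.condition).hom_ext _ _) (fun s => (H _ _ s.condition).hom_ext _ _)
    (fun s _ _ _ => (H _ _ s.condition).hom_ext _ _)⟩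

theorem CategoryTheory.IsPullback.sigmaDesc_of_subsingleton {J : Type*} [Subsingleton J]
    {A : J → C} [HasCoproduct A] {X Y Z : C} {q₁ : ∀ j, A j ⟶ X} {q₂ : ∀ j, A j ⟶ Y}
    {f : X ⟶ Z} {g : Y ⟶ Z} (j : J) (h : IsPullback (q₁ j) (q₂ j) f g) :
    IsPullback (Limits.Sigma.desc q₁) (Limits.Sigma.desc q₂) f g :=
  letI : Unique J := uniqueOfSubsingleton j
  h.of_iso (coproductUniqueIso A).symm (Iso.refl _) (Iso.refl _) (Iso.refl _)
    (by simp; rfl) (by simp; rfl) (by simp) (by simp)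

theorem CategoryTheory.IsPullback.comp_sigmaι_of_eq {Z : Type*} (d : Z → C) [HasCoproduct d]
    {z z' : Z} (e : z = z') [Mono (Sigma.ι d z)] {P X Y : C} {fst : P ⟶ X} {snd : P ⟶ Y}
    {f : X ⟶ d z} {g : Y ⟶ d z'} (h : IsPullback fst snd f (g ≫ eqToHom (congrArg d e).symm)) :
    IsPullback fst snd (f ≫ Sigma.ι d z) (g ≫ Sigma.ι d z') := by
  subst e
  simpa using h.comp_mono (Sigma.ι d z)

section IndexedSquare

variable [HasCoproducts.{v} C] [HasInitial C] [HasStrictInitialObjects C]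
  (hVK : ∀ {ι : Type v} (e : ι → C), IsVanKampenColimit (colimit.cocone (Discrete.functor e)))
  {W X Y Z : Type v} {f : W → X} {g : W → Y} {h : X → Z} {k : Y → Z}
  (hindex : IsPullback (C := Type v) (TypeCat.ofHom f) (TypeCat.ofHom g) (TypeCat.ofHom h)
    (TypeCat.ofHom k))
  {a : W → C} {b : X → C} {c : Y → C} {d : Z → C}
  {af : ∀ w, a w ⟶ b (f w)} {ag : ∀ w, a w ⟶ c (g w)}
  {bh : ∀ x, b x ⟶ d (h x)} {ck : ∀ y, c y ⟶ d (k y)}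
  (hsq : ∀ w, IsPullback (af w) (ag w) (bh (f w) ≫ Sigma.ι d (h (f w)))
    (ck (g w) ≫ Sigma.ι d (k (g w))))

include hVK hindex hsq in
theorem isPullback_sigma_fiber (x : X) (y : Y) :
    IsPullback
      (Sigma.desc fun w : {w // (f w, g w) = (x, y)} =>
        af w.1 ≫ eqToHom (congrArg (b ∘ Prod.fst) w.2))
      (Sigma.desc fun w : {w // (f w, g w) = (x, y)} =>
        ag w.1 ≫ eqToHom (congrArg (c ∘ Prod.snd) w.2))
      (bh x ≫ Sigma.ι d (h x)) (ck y ≫ Sigma.ι d (k y)) := by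
  by_cases hne : Nonempty {w // (f w, g w) = (x, y)}
  · obtain ⟨w, hw⟩ := hne
    obtain ⟨rfl, rfl⟩ := Prod.mk.inj hw
    have : Subsingleton {w' // (f w', g w') = (f w, g w)} :=
      ⟨fun ⟨w₁, hw₁⟩ ⟨w₂, hw₂⟩ => Subtype.ext <| Types.ext_of_isPullback hindex
        (congrArg Prod.fst (hw₁.trans hw₂.symm)) (congrArg Prod.snd (hw₁.trans hw₂.symm))⟩
    exact .sigmaDesc_of_subsingleton ⟨w, rfl⟩ (by simpa using hsq w)
  · rw [not_nonempty_iff] at hne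
    have hhk : h x ≠ k y := fun e => by
      obtain ⟨w, rfl, rfl⟩ := Types.exists_of_isPullback hindex x y e
      exact hne.false ⟨w, rfl⟩
    refine .of_isInitial (IsUniversalColimit.isInitialOfIsEmpty (hVK _).isUniversal (𝟙 _)) _ _
      fun u v huv => Cofan.isInitialOfInjEq (hVK d) hhk (u ≫ bh x) (v ≫ ck y)
        (by rw [Category.assoc, Category.assoc]; exact huv)

end IndexedSquare

/-- In an extensive category, the coproduct of a pullback-indexed family of pullback squares
is a pullback square. -/
theorem coproduct_of_indexed_pullbacks
    {C : Type u} [Category.{v} C] [HasPullbacks C] [HasCoproducts.{v} C]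
    (hVK : ∀ {ι : Type v} (F : Discrete ι ⥤ C) (c : Cocone F),
      IsColimit c → IsVanKampenColimit c)
    {W X Y Z : Type v} {f : W → X} {g : W → Y} {h : X → Z} {k : Y → Z}
    (hcomm : ∀ w, h (f w) = k (g w))
    (hindex : IsPullback (C := Type v) (TypeCat.ofHom f) (TypeCat.ofHom g) (TypeCat.ofHom h)
      (TypeCat.ofHom k))
    (a : W → C) (b : X → C) (c : Y → C) (d : Z → C)
    (af : ∀ w, a w ⟶ b (f w)) (ag : ∀ w, a w ⟶ c (g w))
    (bh : ∀ x, b x ⟶ d (h x)) (ck : ∀ y, c y ⟶ d (k y))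
    (hfib : ∀ w, IsPullback (af w) (ag w) (bh (f w))
      (ck (g w) ≫ eqToHom (congrArg d (hcomm w)).symm)) :
    IsPullback
      (Sigma.desc fun w => af w ≫ Sigma.ι b (f w))
      (Sigma.desc fun w => ag w ≫ Sigma.ι c (g w))
      (Sigma.desc fun x => bh x ≫ Sigma.ι d (h x))
      (Sigma.desc fun y => ck y ≫ Sigma.ι d (k y)) := by
  have hVK' {ι : Type v} (e : ι → C) :
      IsVanKampenColimit (colimit.cocone (Discrete.functor e)) :=
    hVK _ _ (colimit.isColimit _)
  have := IsUniversalColimit.hasStrictInitialObjects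
    (hVK' (PEmpty.elim : PEmpty.{v + 1} → C)).isUniversal
  have (z : Z) : Mono (Sigma.ι d z) := mono_of_cofan_isVanKampen (hVK' d) ⟨z⟩
  have hsq (w : W) := (hfib w).comp_sigmaι_of_eq d (hcomm w)
  have hsum := (hVK' b).isUniversal.isPullback_prod_of_isColimit (hVK' c).isUniversal
    (fun x => bh x ≫ Sigma.ι d (h x)) (fun y => ck y ≫ Sigma.ι d (k y))
    (Sigma.desc fun x => bh x ≫ Sigma.ι d (h x)) (Sigma.desc fun y => ck y ≫ Sigma.ι d (k y))
    (isPullback_sigma_fiber hVK' hindex hsq) _ (isColimitFiberwiseCofan (fun w => (f w, g w)) a)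
    (fun _ => Sigma.ι_desc _ _) (fun _ => Sigma.ι_desc _ _)
  simpa [Cofan.inj] using hsum
end
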